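/- A set S ⊆ ℕ^ℕ is Δ⁰₂ if and only if there exists T ⊆ ℕ^ℕ such that S = T \ [T_∞]. -/

import Mathlib

open Ordinal Filter Topology

/-- The first `n` values of `f` as a finite sequence. -/
def seg (f : ℕ → ℕ) (n : ℕ) : List ℕ := (List.range n).map f

/-- `[X]`: the set of infinite sequences all of whose initial segments lie in `X`. -/
def ext (X : Set (List ℕ)) : Set (ℕ → ℕ) := {f | ∀ n, seg f n ∈ X}

/-- `σ` is an initial segment of `f`. -/
def isInit (σ : List ℕ) (f : ℕ → ℕ) : Prop := seg f σ.length = σ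

/-- One step of the derivative process relative to `S`. -/
def derivStep (S : Set (ℕ → ℕ)) (X : Set (List ℕ)) : Set (List ℕ) :=
  {x ∈ X | ∃ f g : ℕ → ℕ, f ∈ ext X ∧ g ∈ ext X ∧ isInit x f ∧ isInit x g ∧ f ∈ S ∧ g ∉ S}

/-- The transfinite sequence `S_α`. -/
noncomputable def dSeq (S : Set (ℕ → ℕ)) (α : Ordinal.{0}) : Set (List ℕ) :=
  Ordinal.limitRecOn α Set.univ (fun _ X => derivStep S X)
    (fun o _ ih => ⋂ (β : Set.Iio o), ih β.1 β.2)

/-- `α(S)`: the least ordinal where the process stabilizes. -/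
noncomputable def kernelOrd (S : Set (ℕ → ℕ)) : Ordinal.{0} :=
  sInf {α | dSeq S α = dSeq S (α + 1)}

/-- `S_∞`, the kernel. -/
noncomputable def kernel (S : Set (ℕ → ℕ)) : Set (List ℕ) := dSeq S (kernelOrd S)

/-- `β(σ)`: the least ordinal `α` with `σ ∉ S_α`. -/
noncomputable def bOrd (S : Set (ℕ → ℕ)) (σ : List ℕ) : Ordinal.{0} :=
  sInf {α | σ ∉ dSeq S α}

open Classical in
/-- `S` is guessable. -/
def Guessable (S : Set (ℕ → ℕ)) : Prop :=
  ∃ G : List ℕ → ℕ, ∀ f : ℕ → ℕ,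
    Tendsto (fun n => G (seg f n)) atTop (𝓝 (if f ∈ S then 1 else 0))

/-- `Δ⁰₂`: both a countable union of closed sets and a countable intersection of open sets. -/
def IsDelta02 (S : Set (ℕ → ℕ)) : Prop :=
  (∃ F : ℕ → Set (ℕ → ℕ), (∀ n, IsClosed (F n)) ∧ S = ⋃ n, F n) ∧
  (∃ U : ℕ → Set (ℕ → ℕ), (∀ n, IsOpen (U n)) ∧ S = ⋂ n, U n)

/-!
If `S` is `Δ⁰₂`, take `T = S`. The kernel `S_∞` is a fixed point of the derivative, so every node
of it has branches through `[S_∞]` both in `S` and outside `S`: both `S` and its complement are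
dense in the closed set `[S_∞]`. Both are `G_δ`, so by Baire category `S` misses `[S_∞]`.

Conversely `T \ [T_∞]` is guessable, hence `Δ⁰₂`. A branch `f ∉ [T_∞]` has a layer `γ` with
`f ∈ [T_γ] \ [T_{γ+1}]`, and from some point on its initial segments `σ` lie in `T_γ \ T_{γ+1}`.
For such `σ`, guess whether some branch of `T ∩ [T_γ]` extends `σ`: if `f ∉ T`, such a branch
together with `f` would put `σ` into `T_{γ+1}`.
-/

open PiNat

theorem seg_eq_seg_iff {f g : ℕ → ℕ} {n : ℕ} : seg g n = seg f n ↔ g ∈ cylinder f n := by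
  simp [seg, List.map_inj_left]

theorem isInit_seg_iff {f g : ℕ → ℕ} {n : ℕ} : isInit (seg f n) g ↔ g ∈ cylinder f n := by
  simp [isInit, seg, List.map_inj_left]

theorem isOpen_setOf_seg (P : List ℕ → Prop) (n : ℕ) : IsOpen {f : ℕ → ℕ | P (seg f n)} :=
  isOpen_iff_forall_mem_open.2 fun f hf =>
    ⟨cylinder f n, fun g hg => by rwa [Set.mem_ofPred_eq, seg_eq_seg_iff.2 hg],
      isOpen_cylinder _ f n, self_mem_cylinder f n⟩

theorem isClosed_setOf_seg (P : List ℕ → Prop) (n : ℕ) : IsClosed {f : ℕ → ℕ | P (seg f n)} :=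
  isOpen_compl_iff.1 (isOpen_setOf_seg (fun σ => ¬ P σ) n)

theorem isClosed_ext (X : Set (List ℕ)) : IsClosed (ext X) := by
  simpa only [ext, Set.ofPred_forall] using isClosed_iInter fun n => isClosed_setOf_seg (· ∈ X) n

theorem ext_mono {X Y : Set (List ℕ)} (h : X ⊆ Y) : ext X ⊆ ext Y :=
  fun _ hf n => h (hf n)

theorem ext_iInter {ι : Sort*} (X : ι → Set (List ℕ)) : ext (⋂ i, X i) = ⋂ i, ext (X i) := by
  ext f
  simp only [ext, Set.mem_iInter, Set.mem_ofPred_eq]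
  exact forall_comm

theorem Ordinal.exists_and_not_add_one_of_not {P : Ordinal.{u} → Prop} (zero : P 0)
    (limit : ∀ o, Order.IsSuccLimit o → (∀ β < o, P β) → P o) {α : Ordinal.{u}} (hα : ¬ P α) :
    ∃ γ, P γ ∧ ¬ P (γ + 1) := by
  by_contra! h
  induction α using Ordinal.limitRecOn with
  | zero => exact hα zero
  | add_one α ih => exact hα (h α (by_contra ih))
  | limit o ho ih => exact hα (limit o ho fun β hβ => by_contra (ih β hβ))

section DerivedSequence

variable (S : Set (ℕ → ℕ))

theorem dSeq_zero : dSeq S 0 = Set.univ :=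
  Ordinal.limitRecOn_zero _ _ _

theorem dSeq_add_one (α : Ordinal.{0}) : dSeq S (α + 1) = derivStep S (dSeq S α) :=
  Ordinal.limitRecOn_add_one _ _ _ _

theorem dSeq_limit {o : Ordinal.{0}} (ho : Order.IsSuccLimit o) :
    dSeq S o = ⋂ β : Set.Iio o, dSeq S β :=
  Ordinal.limitRecOn_limit _ _ _ _ ho

theorem derivStep_subset (X : Set (List ℕ)) : derivStep S X ⊆ X :=
  fun _ hx => hx.1

theorem derivStep_mono {X Y : Set (List ℕ)} (h : X ⊆ Y) : derivStep S X ⊆ derivStep S Y :=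
  fun _ ⟨hx, f, g, hf, hg, rest⟩ => ⟨h hx, f, g, ext_mono h hf, ext_mono h hg, rest⟩

theorem seg_mem_derivStep_of_le {X : Set (List ℕ)} {f : ℕ → ℕ} {m n : ℕ} (hmn : m ≤ n)
    (hn : seg f n ∈ derivStep S X) : seg f m ∈ derivStep S X := by
  obtain ⟨-, g, h, hg, hh, hgf, hhf, hgS, hhS⟩ := hn
  have hgf' := cylinder_anti f hmn (isInit_seg_iff.1 hgf)
  have hhf' := cylinder_anti f hmn (isInit_seg_iff.1 hhf)
  refine ⟨?_, g, h, hg, hh, isInit_seg_iff.2 hgf', isInit_seg_iff.2 hhf', hgS, hhS⟩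
  rw [← seg_eq_seg_iff.2 hgf']
  exact hg m

theorem dSeq_antitone : Antitone (dSeq S) := by
  intro α β hαβ
  induction β using Ordinal.limitRecOn with
  | zero => rw [nonpos_iff_eq_zero.1 hαβ]
  | add_one β ih =>
    rcases hαβ.lt_or_eq with h | rfl
    · rw [dSeq_add_one]
      exact (derivStep_subset S _).trans (ih (Order.le_of_lt_add_one h))
    · rfl
  | limit o ho ih =>
    rcases hαβ.lt_or_eq with h | rfl
    · rw [dSeq_limit S ho]
      exact Set.iInter_subset_of_subset ⟨α, h⟩ subset_rfl
    · rfl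

theorem le_of_mem_dSeq_of_notMem_add_one {σ : List ℕ} {β γ : Ordinal.{0}} (hβ : σ ∈ dSeq S β)
    (hγ : σ ∉ dSeq S (γ + 1)) : β ≤ γ :=
  not_lt.1 fun h => hγ (dSeq_antitone S (Order.add_one_le_of_lt h) hβ)

theorem exists_dSeq_add_one_eq : ∃ α, dSeq S (α + 1) = dSeq S α := by
  by_contra! h
  have hanti : StrictAnti (dSeq S) := fun α β hαβ =>
    (dSeq_antitone S (Order.add_one_le_of_lt hαβ)).trans_lt
      (((dSeq_add_one S α).trans_subset (derivStep_subset S _)).lt_of_ne (h α))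
  exact not_small_ordinal.{0} (small_of_injective hanti.injective)

theorem derivStep_kernel : derivStep S (kernel S) = kernel S := by
  obtain ⟨α, hα⟩ := exists_dSeq_add_one_eq S
  rw [kernel, ← dSeq_add_one]
  exact (csInf_mem (s := {α | dSeq S α = dSeq S (α + 1)}) ⟨α, hα.symm⟩).symm

theorem kernel_subset_dSeq (α : Ordinal.{0}) : kernel S ⊆ dSeq S α := by
  induction α using Ordinal.limitRecOn with
  | zero => rw [dSeq_zero]; exact Set.subset_univ _
  | add_one α ih => rw [dSeq_add_one]; exact (derivStep_kernel S).ge.trans (derivStep_mono S ih)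
  | limit o ho ih => rw [dSeq_limit S ho]; exact Set.subset_iInter fun β => ih β.1 β.2

theorem exists_mem_ext_dSeq_notMem_add_one {f : ℕ → ℕ} (hf : f ∉ ext (kernel S)) :
    ∃ γ, f ∈ ext (dSeq S γ) ∧ f ∉ ext (dSeq S (γ + 1)) :=
  Ordinal.exists_and_not_add_one_of_not (P := fun α => f ∈ ext (dSeq S α))
    (by simp [dSeq_zero, ext])
    (fun o ho h => by
      rw [dSeq_limit S ho, ext_iInter]
      exact Set.mem_iInter.2 fun β => h β.1 β.2)
    hf

end DerivedSequence

theorem IsDelta02.compl {S : Set (ℕ → ℕ)} (hS : IsDelta02 S) : IsDelta02 Sᶜ := by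
  obtain ⟨⟨F, hF, hSF⟩, ⟨U, hU, hSU⟩⟩ := hS
  exact ⟨⟨fun n => (U n)ᶜ, fun n => (hU n).isClosed_compl, by rw [hSU, Set.compl_iInter]⟩,
    ⟨fun n => (F n)ᶜ, fun n => (hF n).isOpen_compl, by rw [hSF, Set.compl_iUnion]⟩⟩

theorem IsDelta02.isGδ {S : Set (ℕ → ℕ)} (hS : IsDelta02 S) : IsGδ S := by
  obtain ⟨-, U, hU, rfl⟩ := hS
  exact .iInter_of_isOpen hU

theorem dense_preimage_val_of_forall_cylinder {X A : Set (ℕ → ℕ)}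
    (h : ∀ f ∈ X, ∀ n, ∃ g ∈ X ∩ A, g ∈ cylinder f n) :
    Dense (((↑) : X → ℕ → ℕ) ⁻¹' A) := by
  rw [Subtype.dense_iff, Subtype.image_preimage_coe]
  intro f hf
  rw [(isTopologicalBasis_cylinders _).mem_closure_iff]
  rintro _ ⟨x, n, rfl⟩ hfx
  obtain ⟨g, hg, hgf⟩ := h f hf n
  exact ⟨g, by rwa [← mem_cylinder_iff_eq.1 hfx], hg⟩

theorem IsDelta02.disjoint_ext_kernel {S : Set (ℕ → ℕ)} (hS : IsDelta02 S) :
    Disjoint S (ext (kernel S)) := by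
  have : BaireSpace (ext (kernel S)) := by
    have := (isClosed_ext (kernel S)).polishSpace
    infer_instance
  have hdense : ∀ A : Set (ℕ → ℕ), (∀ σ ∈ kernel S, ∃ g ∈ ext (kernel S) ∩ A, isInit σ g) →
      Dense (((↑) : ext (kernel S) → ℕ → ℕ) ⁻¹' A) := fun A hA =>
    dense_preimage_val_of_forall_cylinder fun f hf n => by
      obtain ⟨g, hg, hgf⟩ := hA (seg f n) (hf n)
      exact ⟨g, hg, isInit_seg_iff.1 hgf⟩
  have hdS := hdense S fun σ hσ => by
    obtain ⟨-, g, -, hg, -, hgσ, -, hgS, -⟩ := (derivStep_kernel S).ge hσ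
    exact ⟨g, ⟨hg, hgS⟩, hgσ⟩
  have hdSc := hdense Sᶜ fun σ hσ => by
    obtain ⟨-, -, g, -, hg, -, hgσ, -, hgS⟩ := (derivStep_kernel S).ge hσ
    exact ⟨g, ⟨hg, hgS⟩, hgσ⟩
  refine Set.disjoint_left.2 fun f _ hf => ?_
  have : Nonempty (ext (kernel S)) := ⟨⟨f, hf⟩⟩
  obtain ⟨g, hgS, hgSc⟩ := (Dense.inter_of_Gδ (hS.isGδ.preimage continuous_subtype_val)
    (hS.compl.isGδ.preimage continuous_subtype_val) hdS hdSc).nonempty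
  exact hgSc hgS

theorem Guessable.isDelta02 {S : Set (ℕ → ℕ)} (hS : Guessable S) : IsDelta02 S := by
  classical
  obtain ⟨G, hG⟩ := hS
  have hlim (f : ℕ → ℕ) (c : ℕ) :
      (∀ᶠ n in atTop, G (seg f n) = c) ↔ (if f ∈ S then 1 else 0) = c := by
    have hf := tendsto_pure.1 (nhds_discrete ℕ ▸ hG f)
    refine ⟨fun hc => ?_, fun hc => hc ▸ hf⟩
    obtain ⟨n, h1, h2⟩ := (hf.and hc).exists
    exact h1.symm.trans h2
  have hE (c : ℕ) :
      {f | ∀ᶠ n in atTop, G (seg f n) = c} = ⋃ N, ⋂ n ≥ N, {f | G (seg f n) = c} := by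
    ext f
    simp [eventually_atTop]
  have hclosed (c N : ℕ) : IsClosed (⋂ n ≥ N, {f | G (seg f n) = c}) :=
    isClosed_biInter fun n _ => isClosed_setOf_seg (G · = c) n
  refine ⟨⟨fun N => ⋂ n ≥ N, {f | G (seg f n) = 1}, hclosed 1, ?_⟩,
    ⟨fun N => (⋂ n ≥ N, {f | G (seg f n) = 0})ᶜ, fun N => (hclosed 0 N).isOpen_compl, ?_⟩⟩
  · rw [← hE]
    ext f
    rw [Set.mem_ofPred_eq, hlim]
    by_cases hf : f ∈ S <;> simp [hf]
  · rw [← Set.compl_iUnion, ← hE]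
    ext f
    rw [Set.mem_compl_iff, Set.mem_ofPred_eq, hlim]
    by_cases hf : f ∈ S <;> simp [hf]

open Classical in
noncomputable def guessSdiffKernel (T : Set (ℕ → ℕ)) (σ : List ℕ) : ℕ :=
  if ∃ γ, σ ∈ dSeq T γ ∧ σ ∉ dSeq T (γ + 1) ∧ ∃ g ∈ ext (dSeq T γ) ∩ T, isInit σ g then 1 else 0

theorem guessSdiffKernel_seg_of_mem {T : Set (ℕ → ℕ)} {f : ℕ → ℕ} (hf : f ∈ ext (kernel T))
    (n : ℕ) : guessSdiffKernel T (seg f n) = 0 := by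
  rw [guessSdiffKernel, if_neg]
  rintro ⟨γ, -, hγ, -⟩
  exact hγ (kernel_subset_dSeq T _ (hf n))

open Classical in
theorem eventually_guessSdiffKernel_seg_of_notMem {T : Set (ℕ → ℕ)} {f : ℕ → ℕ}
    (hf : f ∉ ext (kernel T)) :
    ∀ᶠ n in atTop, guessSdiffKernel T (seg f n) = if f ∈ T then 1 else 0 := by
  obtain ⟨γ, hfγ, hfγ'⟩ := exists_mem_ext_dSeq_notMem_add_one T hf
  obtain ⟨n₀, hn₀⟩ : ∃ n₀, seg f n₀ ∉ dSeq T (γ + 1) := by simpa [ext] using hfγ'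
  refine eventually_atTop.2 ⟨n₀, fun n hn => ?_⟩
  have hout : seg f n ∉ dSeq T (γ + 1) := fun h =>
    hn₀ (by rw [dSeq_add_one] at h ⊢; exact seg_mem_derivStep_of_le T hn h)
  have hfn : isInit (seg f n) f := isInit_seg_iff.2 (self_mem_cylinder f n)
  split_ifs with hfT
  · rw [guessSdiffKernel, if_pos]
    exact ⟨γ, hfγ n, hout, f, ⟨hfγ, hfT⟩, hfn⟩
  · rw [guessSdiffKernel, if_neg]
    rintro ⟨δ, hδ, hδ', g, ⟨hg, hgT⟩, hgf⟩
    obtain rfl : δ = γ := le_antisymm (le_of_mem_dSeq_of_notMem_add_one T hδ hout)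
      (le_of_mem_dSeq_of_notMem_add_one T (hfγ n) hδ')
    exact hout (by rw [dSeq_add_one]; exact ⟨hfγ n, g, f, hg, hfγ, hgf, hfn, hgT, hfT⟩)

theorem guessable_sdiff_ext_kernel (T : Set (ℕ → ℕ)) : Guessable (T \ ext (kernel T)) := by
  refine ⟨guessSdiffKernel T, fun f => ?_⟩
  rw [nhds_discrete, tendsto_pure]
  by_cases hf : f ∈ ext (kernel T)
  · simp [hf, guessSdiffKernel_seg_of_mem hf]
  · filter_upwards [eventually_guessSdiffKernel_seg_of_notMem hf] with n hn
    by_cases hfT : f ∈ T <;> simp [hn, hfT, hf]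

theorem stmt11 (S : Set (ℕ → ℕ)) :
    IsDelta02 S ↔ ∃ T : Set (ℕ → ℕ), S = T \ ext (kernel T) := by
  constructor
  · exact fun hS => ⟨S, hS.disjoint_ext_kernel.sdiff_eq_left.symm⟩
  · rintro ⟨T, rfl⟩
    exact (guessable_sdiff_ext_kernel T).isDelta02
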